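/- Let n ≥ 2, θ > 0, and let π₁,...,π_N be i.i.d. samples from the Mallows' φ model P_{θ,id}. Then P_{θ,id}( Σ_{i=1}^N inv(π_i ∘ (1,2)) ≤ Σ_{i=1}^N inv(π_i) ) = P( Bin(N, 1/(1+e^{θ})) ≥ N/2 ), where Bin(N,p) denotes a binomial random variable with N trials and success probability p. -/

import Mathlib

open scoped BigOperators Classical

/-- Number of inversions of a permutation of `Fin n`. -/
def numInv {n : ℕ} (π : Equiv.Perm (Fin n)) : ℕ :=
  (Finset.univ.filter fun p : Fin n × Fin n => p.1 < p.2 ∧ π p.2 < π p.1).card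

/-- Mallows' φ model probability mass at `π`, with dispersion `θ` and central ranking `π₀`. -/
noncomputable def mallowsP (n : ℕ) (θ : ℝ) (π₀ π : Equiv.Perm (Fin n)) : ℝ :=
  Real.exp (-θ * numInv (π * π₀⁻¹)) / ∑ σ : Equiv.Perm (Fin n), Real.exp (-θ * numInv σ)

/-- Probability of the event `A` under `N` i.i.d. samples from the Mallows' φ model. -/
noncomputable def probOf (n N : ℕ) (θ : ℝ) (π₀ : Equiv.Perm (Fin n))
    (A : (Fin N → Equiv.Perm (Fin n)) → Prop) : ℝ :=
  ∑ x ∈ Finset.univ.filter A, ∏ i, mallowsP n θ π₀ (x i)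


/-! Multiplying a permutation on the right by the adjacent transposition `(a a+1)` adds one
inversion if `π a < π (a+1)` and removes one otherwise. Hence the event is that at least half of
the samples satisfy `π 2 < π 1`. The bijection `π ↦ π * (1 2)` exchanges the two kinds of
permutations and multiplies the Mallows weight by `e^{-θ}`, so each sample independently satisfies
`π 2 < π 1` with probability `1 / (1 + e^θ)`, and the number of such samples is binomial. -/

open Finset Equiv

section AdjacentSwap

variable {n : ℕ}

def inversions (π : Perm (Fin n)) : Finset (Fin n × Fin n) :=
  univ.filter fun p => p.1 < p.2 ∧ π p.2 < π p.1

theorem mem_inversions {π : Perm (Fin n)} {p : Fin n × Fin n} :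
    p ∈ inversions π ↔ p.1 < p.2 ∧ π p.2 < π p.1 := by
  rw [inversions, mem_filter, and_iff_right (mem_univ p)]

theorem numInv_eq_card_inversions (π : Perm (Fin n)) : numInv π = #(inversions π) := rfl

variable {a b : Fin n}

theorem swap_apply_lt_swap_apply_iff_of_succ_eq (hab : (a : ℕ) + 1 = b) {i j : Fin n}
    (hne₁ : (i, j) ≠ (a, b)) (hne₂ : (i, j) ≠ (b, a)) : swap a b i < swap a b j ↔ i < j := by
  simp only [swap_apply_def, Fin.lt_def]
  simp only [ne_eq, Prod.ext_iff, Fin.ext_iff] at hne₁ hne₂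
  split_ifs <;> simp only [Fin.ext_iff] at * <;> omega

theorem numInv_mul_swap_of_lt (hab : (a : ℕ) + 1 = b) {π : Perm (Fin n)} (h : π a < π b) :
    numInv (π * swap a b) = numInv π + 1 := by
  have hlt : a < b := Fin.lt_def.2 (by omega)
  have hmem : (a, b) ∈ inversions (π * swap a b) := by simp [mem_inversions, hlt, h]
  have herase : #((inversions (π * swap a b)).erase (a, b)) = #(inversions π) := by
    refine card_equiv ((swap a b).prodCongr (swap a b)) fun ⟨i, j⟩ => ?_
    by_cases h1 : (i, j) = (a, b)
    · simp_all [mem_inversions, hlt.le]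
    by_cases h2 : (i, j) = (b, a)
    · simp_all [mem_inversions, h.le]
    simp [mem_inversions, h1, swap_apply_lt_swap_apply_iff_of_succ_eq hab h1 h2]
  rw [numInv_eq_card_inversions, numInv_eq_card_inversions, ← card_erase_add_one hmem, herase]

theorem numInv_mul_swap (hab : (a : ℕ) + 1 = b) (π : Perm (Fin n)) :
    (numInv (π * swap a b) : ℤ) = numInv π + 1 - 2 * if π b < π a then 1 else 0 := by
  rcases lt_or_gt_of_ne (π.injective.ne (Fin.ne_of_val_ne (by omega : (a : ℕ) ≠ b))) with h | h
  · simp [numInv_mul_swap_of_lt hab h, not_lt_of_gt h]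
  · have h' : (π * swap a b) a < (π * swap a b) b := by simpa using h
    have := numInv_mul_swap_of_lt hab h'
    rw [mul_swap_mul_self] at this
    simp [this, h]
    ring

theorem sum_numInv_mul_swap_le_iff {ι : Type*} [Fintype ι] (hab : (a : ℕ) + 1 = b)
    (x : ι → Perm (Fin n)) :
    ∑ i, numInv (x i * swap a b) ≤ ∑ i, numInv (x i) ↔
      Fintype.card ι ≤ 2 * #{i | x i b < x i a} := by
  have hsum : ∑ i, (numInv (x i * swap a b) : ℤ) =
      ∑ i, (numInv (x i) : ℤ) + Fintype.card ι - 2 * #{i | x i b < x i a} := by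
    simp only [numInv_mul_swap hab, sum_sub_distrib, sum_add_distrib, ← mul_sum,
      sum_boole, sum_const, card_univ, nsmul_one]
  zify
  rw [hsum]
  omega

end AdjacentSwap

section Mallows

variable {n : ℕ} {a b : Fin n}

theorem sum_mallowsP (θ : ℝ) (π₀ : Perm (Fin n)) : ∑ π, mallowsP n θ π₀ π = 1 := by
  simp only [mallowsP, ← sum_div]
  rw [div_eq_one_iff_eq (sum_pos (fun _ _ => Real.exp_pos _) univ_nonempty).ne']
  exact Fintype.sum_equiv (Equiv.mulRight π₀⁻¹) _ _ fun _ => rfl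

theorem mallowsP_one_mul_swap_of_lt (hab : (a : ℕ) + 1 = b) (θ : ℝ) {π : Perm (Fin n)}
    (h : π a < π b) : mallowsP n θ 1 (π * swap a b) = Real.exp (-θ) * mallowsP n θ 1 π := by
  simp only [mallowsP, inv_one, mul_one, numInv_mul_swap_of_lt hab h, mul_div_assoc',
    ← Real.exp_add]
  congr 2
  push_cast
  ring

theorem sum_mallowsP_apply_lt (hab : (a : ℕ) + 1 = b) (θ : ℝ) :
    ∑ π with π b < π a, mallowsP n θ 1 π = 1 / (1 + Real.exp θ) := by
  have hasc (π : Perm (Fin n)) : ¬π b < π a ↔ π a < π b :=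
    not_lt.trans (π.injective.ne (Fin.ne_of_val_ne (by omega))).le_iff_lt
  have hdesc : ∑ π with π b < π a, mallowsP n θ 1 π =
      Real.exp (-θ) * ∑ π with ¬π b < π a, mallowsP n θ 1 π := by
    rw [mul_sum]
    refine sum_nbij' (· * swap a b) (· * swap a b) (fun π hπ => ?_) (fun π hπ => ?_)
      (fun π _ => mul_swap_mul_self a b π) (fun π _ => mul_swap_mul_self a b π) (fun π hπ => ?_)
    · simpa [hasc] using hπ
    · simpa [hasc] using hπ
    · have hπ' : (π * swap a b) a < (π * swap a b) b := by simpa using hπ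
      rw [← mallowsP_one_mul_swap_of_lt hab θ hπ', mul_swap_mul_self]
  have htotal := sum_filter_add_sum_filter_not univ (fun π : Perm (Fin n) => π b < π a)
    (mallowsP n θ 1)
  rw [sum_mallowsP, hdesc, Real.exp_neg] at htotal
  rw [hdesc, Real.exp_neg]
  field_simp at htotal ⊢
  linarith

theorem sum_mallowsP_not_apply_lt (hab : (a : ℕ) + 1 = b) (θ : ℝ) :
    ∑ π with ¬π b < π a, mallowsP n θ 1 π = 1 - 1 / (1 + Real.exp θ) := by
  have htotal := sum_filter_add_sum_filter_not univ (fun π : Perm (Fin n) => π b < π a)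
    (mallowsP n θ 1)
  rw [sum_mallowsP, sum_mallowsP_apply_lt hab] at htotal
  linarith

end Mallows

section Binomial

variable {α ι : Type*} [Fintype α] [Fintype ι] [DecidableEq ι] (f : α → ℝ) (E : α → Prop)
  [DecidablePred E]

theorem sum_prod_fiber_eq_pow_mul_pow (T : Finset ι) :
    ∑ x : ι → α with univ.filter (fun i => E (x i)) = T, ∏ i, f (x i) =
      (∑ a with E a, f a) ^ #T * (∑ a with ¬E a, f a) ^ (Fintype.card ι - #T) := by
  have hfiber : univ.filter (fun x : ι → α => univ.filter (fun i => E (x i)) = T) =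
      Fintype.piFinset fun i => univ.filter fun a => (E a ↔ i ∈ T) := by
    ext x
    simp [Finset.ext_iff]
  have hfactor (i : ι) : ∑ a with (E a ↔ i ∈ T), f a =
      if i ∈ T then ∑ a with E a, f a else ∑ a with ¬E a, f a := by
    split_ifs with h <;> simp [h]
  rw [hfiber, ← prod_univ_sum, Fintype.prod_congr _ _ hfactor, prod_ite]
  simp [filter_not, card_sdiff]

theorem sum_prod_filter_card_eq_sum_choose (P : ℕ → Prop) [DecidablePred P] :
    ∑ x : ι → α with P #{i | E (x i)}, ∏ i, f (x i) =
      ∑ m ∈ range (Fintype.card ι + 1), if P m then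
        ((Fintype.card ι).choose m : ℝ) * (∑ a with E a, f a) ^ m *
          (∑ a with ¬E a, f a) ^ (Fintype.card ι - m) else 0 := by
  set q := ∑ a with E a, f a
  set r := ∑ a with ¬E a, f a
  have hfiber (T : Finset ι) :
      ∑ x : ι → α with univ.filter (fun i => E (x i)) = T,
          (if P #{i | E (x i)} then ∏ i, f (x i) else 0) =
        if P #T then q ^ #T * r ^ (Fintype.card ι - #T) else 0 := by
    rw [sum_congr rfl fun x hx => by rw [(mem_filter.1 hx).2], sum_ite_irrel, sum_const_zero,
      sum_prod_fiber_eq_pow_mul_pow]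
  rw [sum_filter, ← sum_fiberwise univ (fun x : ι → α => univ.filter fun i => E (x i)),
    Fintype.sum_congr _ _ hfiber, ← powerset_univ,
    sum_powerset_apply_card fun m => if P m then q ^ m * r ^ (Fintype.card ι - m) else 0,
    card_univ]
  refine sum_congr rfl fun m _ => ?_
  rw [smul_ite, smul_zero, nsmul_eq_mul, mul_assoc]

end Binomial

/-- the probability that the transposition `(1,2)` is at least as likely as
the identity under the total-inversions criterion equals the binomial tail probability
`P(Bin(N, 1/(1+e^θ)) ≥ N/2)`. -/
theorem mallows_transposition_12_binomial_tail
    (n : ℕ) (hn : 2 ≤ n) (θ : ℝ) (N : ℕ) :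
    probOf n N θ 1 (fun x =>
        ∑ i, numInv (x i * Equiv.swap (⟨0, by omega⟩ : Fin n) (⟨1, by omega⟩ : Fin n)) ≤
          ∑ i, numInv (x i)) =
      ∑ m ∈ Finset.range (N + 1),
        if (N : ℝ) / 2 ≤ m then
          (N.choose m : ℝ) * (1 / (1 + Real.exp θ)) ^ m *
            (1 - 1 / (1 + Real.exp θ)) ^ (N - m)
        else 0 := by
  set a : Fin n := ⟨0, by omega⟩
  set b : Fin n := ⟨1, by omega⟩
  have hab : (a : ℕ) + 1 = b := rfl
  simp only [probOf, sum_numInv_mul_swap_le_iff hab, Fintype.card_fin]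
  rw [sum_prod_filter_card_eq_sum_choose _ (fun π : Perm (Fin n) => π b < π a) (N ≤ 2 * ·),
    Fintype.card_fin, sum_mallowsP_apply_lt hab, sum_mallowsP_not_apply_lt hab]
  refine sum_congr rfl fun m _ => if_congr ?_ rfl rfl
  rw [div_le_iff₀ two_pos]
  norm_cast
  omega
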